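/- Let B be a deterministic decision tree on inputs from {0,1}^m (i.e., t = 1) and let Q be a consistent distribution over pairs (μ0, μ1) of distributions on {0,1}^m. Then (B,Q) is full (i.e., Σ_v Δ(v)R(v) = 1 for every (μ0,μ1) ∈ supp(Q)) if and only if the query process P(B,Q) queries the input bit z with probability 1; moreover, if (B,Q) is full then χ(B,Q) = E[N_1(B, 1, Q)], the expected number of simulated queries made before z is queried. -/

import Mathlib

open Finset

inductive DTree (ι : Type) (S : Type) where
  | leaf : S → DTree ι S
  | node : ι → DTree ι S → DTree ι S → DTree ι S

namespace DTree

/-- Evaluate a deterministic decision tree on an input. -/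
def eval {ι S : Type} : DTree ι S → (ι → Bool) → S
  | leaf s, _ => s
  | node i t0 t1, x => if x i then t1.eval x else t0.eval x

/-- The depth (worst-case number of queries) of a decision tree. -/
def depth {ι S : Type} : DTree ι S → ℕ
  | leaf _ => 0
  | node _ t0 t1 => max t0.depth t1.depth + 1

/-- The number of queries a decision tree makes on a given input. -/
def queries {ι S : Type} : DTree ι S → (ι → Bool) → ℕ
  | leaf _, _ => 0
  | node i t0 t1, x => (if x i then t1.queries x else t0.queries x) + 1

end DTree

/-- A probability distribution on a finite type, as a nonnegative real weight function summing to 1. -/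
def IsDist {γ : Type} [Fintype γ] (μ : γ → ℝ) : Prop :=
  (∀ x, 0 ≤ μ x) ∧ ∑ x, μ x = 1

/-- The support of `μ` is contained in `A`. -/
def SuppIn {γ : Type} [Fintype γ] (μ : γ → ℝ) (A : Set γ) : Prop :=
  ∀ x, μ x ≠ 0 → x ∈ A

/-- `g⁻¹(b)` for a partial Boolean function given as a relation. -/
def preim {m : ℕ} (g : Set ((Fin m → Bool) × Bool)) (b : Bool) : Set (Fin m → Bool) :=
  {x | (x, b) ∈ g ∧ (x, !b) ∉ g}

/-- `x` is a valid input of the partial Boolean function `g`. -/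
def ValidIn {m : ℕ} (g : Set ((Fin m → Bool) × Bool)) (x : Fin m → Bool) : Prop :=
  x ∈ preim g false ∨ x ∈ preim g true

/-- A deterministic decision tree computes the partial Boolean function `g`. -/
def Computes {m : ℕ} (T : DTree (Fin m) Bool) (g : Set ((Fin m → Bool) × Bool)) : Prop :=
  ∀ b : Bool, ∀ x ∈ preim g b, T.eval x = b

/-- The paper's convention for partial Boolean functions: for every invalid input `y`, both
`(y,0)` and `(y,1)` belong to the relation (so that any output is accepted on invalid inputs).
`totalize g` adds all such pairs; it has the same valid inputs and the same `g⁻¹(b)` as `g`. -/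
def totalize {m : ℕ} (g : Set ((Fin m → Bool) × Bool)) : Set ((Fin m → Bool) × Bool) :=
  {p | p ∈ g ∨ ¬ ValidIn g p.1}

/-- Probability that coordinate `j` equals `b` under `μ`. -/
noncomputable def prb {m : ℕ} (μ : (Fin m → Bool) → ℝ) (j : Fin m) (b : Bool) : ℝ :=
  ∑ x, if x j = b then μ x else 0

/-- `μ` conditioned on coordinate `j` being equal to `b` (zero if the event has probability zero). -/
noncomputable def condD {m : ℕ} (μ : (Fin m → Bool) → ℝ) (j : Fin m) (b : Bool) :
    (Fin m → Bool) → ℝ :=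
  fun x => if x j = b then μ x / prb μ j b else 0

/-- `chiW T μ0 μ1 = (Σ_v Δ(v)R(v), Σ_v d_T(v)Δ(v)R(v))`, where at a node `v` querying `j`,
`p_b(v)` is the probability that the queried bit is `0` under `μ_b` conditioned on reaching `v`,
`Δ(v) = |p_0(v) - p_1(v)|`, and `R(v)` is the product along the path to `v` of
`min` of the two conditional transition probabilities; the depth of the root is 1. -/
noncomputable def chiW {m : ℕ} {S : Type} :
    DTree (Fin m) S → ((Fin m → Bool) → ℝ) → ((Fin m → Bool) → ℝ) → ℝ × ℝ
  | .leaf _, _, _ => (0, 0)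
  | .node j t0 t1, μ0, μ1 =>
    let p0 := prb μ0 j false
    let p1 := prb μ1 j false
    let r0 := chiW t0 (condD μ0 j false) (condD μ1 j false)
    let r1 := chiW t1 (condD μ0 j true) (condD μ1 j true)
    (|p0 - p1| + min p0 p1 * r0.1 + min (1 - p0) (1 - p1) * r1.1,
     |p0 - p1| + min p0 p1 * r0.1 + min (1 - p0) (1 - p1) * r1.1
       + min p0 p1 * r0.2 + min (1 - p0) (1 - p1) * r1.2)

/-- The conflict complexity `χ(T,(μ0,μ1)) = Σ_v d_T(v)·Δ(v)·R(v)` of a tree with respect to a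
pair of distributions. -/
noncomputable def chi {m : ℕ} {S : Type} (T : DTree (Fin m) S)
    (μ0 μ1 : (Fin m → Bool) → ℝ) : ℝ :=
  (chiW T μ0 μ1).2

/-- `(T,(μ0,μ1))` is full: `Σ_v Δ(v)·R(v) = 1`. -/
def FullPair {m : ℕ} {S : Type} (T : DTree (Fin m) S)
    (μ0 μ1 : (Fin m → Bool) → ℝ) : Prop :=
  (chiW T μ0 μ1).1 = 1

/-- The probability that the query process `P(B,Q)` run on `z` (with current per-block states
`st`) never queries the input bit `z` of block 1 (single-block version, i.e., reaches a leaf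
with the block still in the unqueried state). -/
noncomputable def noQueryProb {m : ℕ} {S : Type} :
    DTree (Fin m) S → ((Fin m → Bool) → ℝ) → ((Fin m → Bool) → ℝ) → ℝ
  | .leaf _, _, _ => 1
  | .node j t0 t1, μ0, μ1 =>
    min (prb μ0 j false) (prb μ1 j false) *
      noQueryProb t0 (condD μ0 j false) (condD μ1 j false)
    + min (1 - prb μ0 j false) (1 - prb μ1 j false) *
      noQueryProb t1 (condD μ0 j true) (condD μ1 j true)

/-- Expected number of simulated queries `N_1` made by the single-block query process before the
input bit `z` is queried (counting the query at which `z` is queried, and all queries if `z` is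
never queried). -/
noncomputable def ENq {m : ℕ} {S : Type} :
    DTree (Fin m) S → ((Fin m → Bool) → ℝ) → ((Fin m → Bool) → ℝ) → ℝ
  | .leaf _, _, _ => 0
  | .node j t0 t1, μ0, μ1 =>
    1 + min (prb μ0 j false) (prb μ1 j false) *
      ENq t0 (condD μ0 j false) (condD μ1 j false)
    + min (1 - prb μ0 j false) (1 - prb μ1 j false) *
      ENq t1 (condD μ0 j true) (condD μ1 j true)

/-! At a node with `p_b = Pr_{μ_b}[x_j = 0]` the query process leaves `z` unqueried with
probability `min p₀ p₁ + min (1 - p₀) (1 - p₁) = 1 - |p₀ - p₁|`. So `Δ(v)R(v)` is the probability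
that `z` is first queried at `v`, and `Σ_v Δ(v)R(v) = 1 - Pr[z is never queried]`.
`E[N_1] = Σ_v R(v)`, since `R(v)` is the probability of reaching `v` with `z` unqueried; when `z`
is queried almost surely, `R(v) = Σ_{u below v} Δ(u)R(u)`, and counting each `u` once for each of
its `d(u)` ancestors gives `E[N_1] = Σ_u d(u)Δ(u)R(u) = χ`. -/

-- `condD` of a null event is the zero function, so only subdistributions are closed under it.
def SubDist {m : ℕ} (μ : (Fin m → Bool) → ℝ) : Prop :=
  (∀ x, 0 ≤ μ x) ∧ ∑ x, μ x ≤ 1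

lemma abs_sub_add_min_add_min_one_sub (p q : ℝ) :
    |p - q| + min p q + min (1 - p) (1 - q) = 1 := by
  rcases le_total p q with h | h
  · rw [abs_of_nonpos (by linarith), min_eq_left h, min_eq_right (by linarith)]; ring
  · rw [abs_of_nonneg (by linarith), min_eq_right h, min_eq_left (by linarith)]; ring

lemma prb_nonneg {m : ℕ} {μ : (Fin m → Bool) → ℝ} (h : ∀ x, 0 ≤ μ x) (j : Fin m) (b : Bool) :
    0 ≤ prb μ j b :=
  sum_nonneg fun x _ => by split <;> simp [h x]

namespace SubDist

variable {m : ℕ} {μ : (Fin m → Bool) → ℝ}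

lemma prb_le_one (h : SubDist μ) (j : Fin m) (b : Bool) : prb μ j b ≤ 1 :=
  (sum_le_sum fun x _ => by split <;> simp [h.1 x]).trans h.2

lemma condD (h : SubDist μ) (j : Fin m) (b : Bool) : SubDist (condD μ j b) := by
  have hsum : ∑ x, _root_.condD μ j b x = prb μ j b / prb μ j b := by
    rw [prb, sum_div]
    exact sum_congr rfl fun x _ => by rw [ite_div, zero_div]; rfl
  refine ⟨fun x => ?_, hsum ▸ div_self_le_one _⟩
  unfold _root_.condD
  split
  · exact div_nonneg (h.1 x) (prb_nonneg h.1 j b)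
  · exact le_rfl

lemma min_prb_nonneg {μ' : (Fin m → Bool) → ℝ} (h : SubDist μ) (h' : SubDist μ')
    (j : Fin m) : 0 ≤ min (prb μ j false) (prb μ' j false) :=
  le_min (prb_nonneg h.1 j false) (prb_nonneg h'.1 j false)

lemma min_one_sub_prb_nonneg {μ' : (Fin m → Bool) → ℝ} (h : SubDist μ) (h' : SubDist μ')
    (j : Fin m) : 0 ≤ min (1 - prb μ j false) (1 - prb μ' j false) :=
  le_min (sub_nonneg.2 (h.prb_le_one j false)) (sub_nonneg.2 (h'.prb_le_one j false))

end SubDist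

section QueryProcess

variable {m : ℕ} {S : Type}

theorem chiW_fst_add_noQueryProb (T : DTree (Fin m) S) (μ0 μ1 : (Fin m → Bool) → ℝ) :
    (chiW T μ0 μ1).1 + noQueryProb T μ0 μ1 = 1 := by
  induction T generalizing μ0 μ1 with
  | leaf s => simp [chiW, noQueryProb]
  | node j t0 t1 ih0 ih1 =>
    simp only [chiW, noQueryProb]
    linear_combination abs_sub_add_min_add_min_one_sub (prb μ0 j false) (prb μ1 j false)
      + min (prb μ0 j false) (prb μ1 j false) * ih0 (condD μ0 j false) (condD μ1 j false)
      + min (1 - prb μ0 j false) (1 - prb μ1 j false) * ih1 (condD μ0 j true) (condD μ1 j true)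

theorem fullPair_iff_noQueryProb_eq_zero (T : DTree (Fin m) S) (μ0 μ1 : (Fin m → Bool) → ℝ) :
    FullPair T μ0 μ1 ↔ noQueryProb T μ0 μ1 = 0 := by
  have := chiW_fst_add_noQueryProb T μ0 μ1
  unfold FullPair
  constructor <;> intro h <;> linarith

theorem noQueryProb_nonneg (T : DTree (Fin m) S) {μ0 μ1 : (Fin m → Bool) → ℝ}
    (h0 : SubDist μ0) (h1 : SubDist μ1) : 0 ≤ noQueryProb T μ0 μ1 := by
  induction T generalizing μ0 μ1 with
  | leaf s => simp [noQueryProb]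
  | node j t0 t1 ih0 ih1 =>
    exact add_nonneg
      (mul_nonneg (h0.min_prb_nonneg h1 j) (ih0 (h0.condD j false) (h1.condD j false)))
      (mul_nonneg (h0.min_one_sub_prb_nonneg h1 j) (ih1 (h0.condD j true) (h1.condD j true)))

theorem ENq_eq_chi_of_noQueryProb_eq_zero (T : DTree (Fin m) S) {μ0 μ1 : (Fin m → Bool) → ℝ}
    (h0 : SubDist μ0) (h1 : SubDist μ1) (hT : noQueryProb T μ0 μ1 = 0) :
    ENq T μ0 μ1 = chi T μ0 μ1 := by
  induction T generalizing μ0 μ1 with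
  | leaf s => rfl
  | node j t0 t1 ih0 ih1 =>
    set a := min (prb μ0 j false) (prb μ1 j false)
    set b := min (1 - prb μ0 j false) (1 - prb μ1 j false)
    have ha : 0 ≤ a := h0.min_prb_nonneg h1 j
    have hb : 0 ≤ b := h0.min_one_sub_prb_nonneg h1 j
    obtain ⟨hn0, hn1⟩ := (add_eq_zero_iff_of_nonneg
      (mul_nonneg ha (noQueryProb_nonneg t0 (h0.condD j false) (h1.condD j false)))
      (mul_nonneg hb (noQueryProb_nonneg t1 (h0.condD j true) (h1.condD j true)))).1 hT
    -- a branch either has weight zero or never leaves `z` unqueried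
    have e0 : a * ENq t0 (condD μ0 j false) (condD μ1 j false)
        = a * chi t0 (condD μ0 j false) (condD μ1 j false) := by
      rcases mul_eq_zero.1 hn0 with ha0 | hz
      · simp [ha0]
      · rw [ih0 (h0.condD j false) (h1.condD j false) hz]
    have e1 : b * ENq t1 (condD μ0 j true) (condD μ1 j true)
        = b * chi t1 (condD μ0 j true) (condD μ1 j true) := by
      rcases mul_eq_zero.1 hn1 with hb0 | hz
      · simp [hb0]
      · rw [ih1 (h0.condD j true) (h1.condD j true) hz]
    simp only [ENq, chi, chiW] at e0 e1 ⊢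
    linear_combination e0 + e1 - abs_sub_add_min_add_min_one_sub (prb μ0 j false) (prb μ1 j false)
      + hn0 + hn1
      - a * chiW_fst_add_noQueryProb t0 (condD μ0 j false) (condD μ1 j false)
      - b * chiW_fst_add_noQueryProb t1 (condD μ0 j true) (condD μ1 j true)

end QueryProcess

theorem full_iff_queries_and_chi_eq_EN_general (m kQ : ℕ) (S : Type) (B : DTree (Fin m) S)
    (w : Fin kQ → ℝ) (M0 M1 : Fin kQ → ((Fin m → Bool) → ℝ))
    (hw : IsDist w) (hM : ∀ c, IsDist (M0 c) ∧ IsDist (M1 c)) :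
    ((∀ c, w c ≠ 0 → FullPair B (M0 c) (M1 c)) ↔
      ∑ c, w c * (1 - noQueryProb B (M0 c) (M1 c)) = 1) ∧
    ((∀ c, w c ≠ 0 → FullPair B (M0 c) (M1 c)) →
      ∑ c, w c * chi B (M0 c) (M1 c) = ∑ c, w c * ENq B (M0 c) (M1 c)) := by
  have hsub : ∀ c, SubDist (M0 c) ∧ SubDist (M1 c) := fun c =>
    ⟨⟨(hM c).1.1, (hM c).1.2.le⟩, ⟨(hM c).2.1, (hM c).2.2.le⟩⟩
  have hsum : ∑ c, w c * (1 - noQueryProb B (M0 c) (M1 c))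
      = 1 - ∑ c, w c * noQueryProb B (M0 c) (M1 c) := by
    simp only [mul_sub, mul_one, sum_sub_distrib, hw.2]
  refine ⟨?_, fun hF => sum_congr rfl fun c _ => ?_⟩
  · rw [hsum, sub_eq_self, sum_eq_zero_iff_of_nonneg fun c _ =>
      mul_nonneg (hw.1 c) (noQueryProb_nonneg B (hsub c).1 (hsub c).2)]
    simp only [mem_univ, true_implies, mul_eq_zero, fullPair_iff_noQueryProb_eq_zero,
      or_iff_not_imp_left]
  · rcases eq_or_ne (w c) 0 with hc | hc
    · simp [hc]
    · rw [ENq_eq_chi_of_noQueryProb_eq_zero B (hsub c).1 (hsub c).2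
        ((fullPair_iff_noQueryProb_eq_zero B _ _).1 (hF c hc))]

/-- For a deterministic decision tree `B` on `{0,1}^m` (the case `t = 1`) and a
consistent distribution `Q` over pairs of distributions, `(B,Q)` is full (i.e.
`Σ_v Δ(v)R(v) = 1` for every pair in the support of `Q`) iff the query process `P(B,Q)` queries
the input bit `z` with probability 1; moreover if `(B,Q)` is full then
`χ(B,Q) = E[N_1(B,1,Q)]`, the expected number of simulated queries made up to and including the
query of `z`. -/
theorem full_iff_queries_and_chi_eq_EN (m kQ : ℕ) (S : Type) (B : DTree (Fin m) S)
    (w : Fin kQ → ℝ) (M0 M1 : Fin kQ → ((Fin m → Bool) → ℝ))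
    (hw : IsDist w) (hM : ∀ c, IsDist (M0 c) ∧ IsDist (M1 c))
    (hcons : ∀ c c' x, M0 c x ≠ 0 → M1 c' x = 0) :
    ((∀ c, w c ≠ 0 → FullPair B (M0 c) (M1 c)) ↔
      ∑ c, w c * (1 - noQueryProb B (M0 c) (M1 c)) = 1) ∧
    ((∀ c, w c ≠ 0 → FullPair B (M0 c) (M1 c)) →
      ∑ c, w c * chi B (M0 c) (M1 c) = ∑ c, w c * ENq B (M0 c) (M1 c)) :=
  full_iff_queries_and_chi_eq_EN_general m kQ S B w M0 M1 hw hM
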